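/- Let γ ∈ (0,1)∪(1,∞), θ, σ_y, μ_y ∈ ℝ, and ρ, r, m > 0 with ρ + m > (1-γ)r + ((1-γ)/(2γ))θ² (so K := (1/γ)(ρ + m − (1-γ)r − ((1-γ)/(2γ))θ²) > 0), and assume κ := r − μ_y + σ_y θ > 0. Define Q̂^B(z,y) := (γ/((1-γ)K))·z^{(γ-1)/γ} + z·y/κ and û(z) := (γ/(1-γ))·z^{(γ-1)/γ}. Then Q̂^B is twice continuously differentiable on (0,∞)², and for all z > 0, y > 0: (1/2)θ²z²·∂²Q̂^B/∂z² + (ρ−r+m)z·∂Q̂^B/∂z + (1/2)σ_y²y²·∂²Q̂^B/∂y² + μ_y y·∂Q̂^B/∂y − θσ_y z y·∂²Q̂^B/∂z∂y − (ρ+m)·Q̂^B(z,y) = −( û(z) + z·y ). -/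

import Mathlib

/-!
`Q̂^B` is a combination of `z^a`, `a = (γ-1)/γ`, and of `z y`, and `L` maps each of them to a
multiple of itself: `z^a` to `p(a) z^a`, where the quadratic symbol `p` of `L` satisfies
`p(a) = -K`, and `z y` to `-κ z y`. The coefficients `γ/((1-γ)K)` and `1/κ` are chosen to turn
these into `-û` and `-z y`.
-/

open Real Set

/-- The operator `L` of the paper; `f_zy` is read as `∂_y ∂_z f`. -/
noncomputable def dualGenerator (θ σy μy ρ r m : ℝ) (f : ℝ → ℝ → ℝ) (z y : ℝ) : ℝ :=
  (1/2)*θ^2*z^2 * deriv (fun z' => deriv (fun z'' => f z'' y) z') z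
    + (ρ - r + m)*z * deriv (fun z' => f z' y) z
    + (1/2)*σy^2*y^2 * deriv (fun y' => deriv (fun y'' => f z y'') y') y
    + μy*y * deriv (fun y' => f z y') y
    - θ*σy*z*y * deriv (fun y' => deriv (fun z' => f z' y') z) y
    - (ρ+m) * f z y

section PowerPlusBilinear

variable (C a κ : ℝ)

theorem contDiffOn_rpow_add_mul (n : WithTop ℕ∞) :
    ContDiffOn ℝ n (fun p : ℝ × ℝ => C * p.1 ^ a + p.1 * p.2 / κ) {p | p.1 ≠ 0} := by
  intro p hp
  apply ContDiffAt.contDiffWithinAt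
  have hpow : ContDiffAt ℝ n (fun q : ℝ × ℝ => q.1 ^ a) p :=
    (contDiffAt_rpow_const_of_ne hp).comp p contDiffAt_fst
  exact (contDiffAt_const.mul hpow).add ((contDiffAt_fst.mul contDiffAt_snd).div_const κ)

theorem hasDerivAt_rpow_add_mul_left (y : ℝ) {z : ℝ} (hz : z ≠ 0) :
    HasDerivAt (fun z' => C * z' ^ a + z' * y / κ) (C * a * z ^ (a - 1) + y / κ) z := by
  have hpow := (hasDerivAt_rpow_const (p := a) (Or.inl hz)).const_mul C
  rw [mul_assoc C a]
  exact hpow.add ((hasDerivAt_mul_const y).div_const κ |>.congr_deriv (one_mul y ▸ rfl))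

theorem deriv_deriv_rpow_add_mul_left (y : ℝ) {z : ℝ} (hz : 0 < z) :
    deriv (fun z' => deriv (fun z'' => C * z'' ^ a + z'' * y / κ) z') z
      = C * a * (a - 1) * z ^ (a - 2) := by
  have hfirst : (fun z' => deriv (fun z'' => C * z'' ^ a + z'' * y / κ) z')
      =ᶠ[nhds z] fun z' => C * a * z' ^ (a - 1) + y / κ := by
    filter_upwards [Ioi_mem_nhds hz] with z' hz'
    exact (hasDerivAt_rpow_add_mul_left C a κ y (ne_of_gt hz')).deriv
  rw [hfirst.deriv_eq]
  have hsecond := ((hasDerivAt_rpow_const (p := a - 1) (Or.inl hz.ne')).const_mul (C * a)).add_const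
    (y / κ)
  rw [hsecond.deriv, sub_sub, one_add_one_eq_two]
  ring

theorem deriv_rpow_add_mul_right (z y : ℝ) :
    deriv (fun y' => C * z ^ a + z * y' / κ) y = z / κ := by
  have h := ((hasDerivAt_id y).const_mul z |>.div_const κ).const_add (C * z ^ a)
  simpa only [id, mul_one, mul_div_assoc] using h.deriv

theorem deriv_mixed_rpow_add_mul {z : ℝ} (hz : z ≠ 0) (y : ℝ) :
    deriv (fun y' => deriv (fun z' => C * z' ^ a + z' * y' / κ) z) y = 1 / κ := by
  have hfirst : (fun y' => deriv (fun z' => C * z' ^ a + z' * y' / κ) z)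
      = fun y' => C * a * z ^ (a - 1) + y' / κ := by
    funext y'
    exact (hasDerivAt_rpow_add_mul_left C a κ y' hz).deriv
  rw [hfirst]
  have h := ((hasDerivAt_id y).div_const κ).const_add (C * a * z ^ (a - 1))
  simpa only [id] using h.deriv

theorem dualGenerator_rpow_add_mul (θ σy μy ρ r m : ℝ) {z : ℝ} (hz : 0 < z) (y : ℝ) :
    dualGenerator θ σy μy ρ r m (fun z y => C * z ^ a + z * y / κ) z y
      = C * ((1/2)*θ^2*a*(a - 1) + (ρ - r + m)*a - (ρ + m)) * z ^ a
        - (r - μy + σy*θ) * (z * y / κ) := by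
  have hsq : z ^ (a - 2) * z ^ 2 = z ^ a := by
    rw [← rpow_natCast, ← rpow_add hz]; norm_num
  have hlin : z ^ (a - 1) * z = z ^ a := by
    rw [rpow_sub_one hz.ne', div_mul_cancel₀ _ hz.ne']
  simp only [dualGenerator, deriv_deriv_rpow_add_mul_left C a κ y hz,
    (hasDerivAt_rpow_add_mul_left C a κ y hz.ne').deriv, deriv_rpow_add_mul_right, deriv_const',
    deriv_mixed_rpow_add_mul C a κ hz.ne']
  linear_combination ((1/2)*θ^2*C*a*(a - 1)) * hsq + ((ρ - r + m)*C*a) * hlin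

end PowerPlusBilinear

/-- The right-hand side is `-K`, minus the Merton consumption rate. -/
theorem symbol_at_dual_exponent (γ θ ρ r m : ℝ) (hγ : γ ≠ 0) :
    (1/2)*θ^2*((γ-1)/γ)*((γ-1)/γ - 1) + (ρ - r + m)*((γ-1)/γ) - (ρ + m)
      = -((1/γ) * (ρ + m - (1-γ)*r - ((1-γ)/(2*γ))*θ^2)) := by
  field_simp
  ring

theorem stmt_6_general (γ θ σy μy ρ r m κ K : ℝ)
    (hγ0 : 0 < γ) (hγ1 : γ ≠ 1)
    (hassume : (1-γ)*r + ((1-γ)/(2*γ))*θ^2 < ρ + m)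
    (hK : K = (1/γ) * (ρ + m - (1-γ)*r - ((1-γ)/(2*γ))*θ^2))
    (hκ : κ = r - μy + σy*θ) (hκ0 : 0 < κ)
    (Q : ℝ → ℝ → ℝ)
    (hQ : ∀ z y : ℝ, Q z y = (γ/((1-γ)*K)) * z^((γ-1)/γ) + z*y/κ) :
    ContDiffOn ℝ 2 (fun p : ℝ × ℝ => Q p.1 p.2) (Set.Ioi 0 ×ˢ Set.Ioi 0) ∧
    ∀ z y : ℝ, 0 < z → 0 < y →
      (1/2)*θ^2*z^2 * deriv (fun z' => deriv (fun z'' => Q z'' y) z') z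
      + (ρ - r + m)*z * deriv (fun z' => Q z' y) z
      + (1/2)*σy^2*y^2 * deriv (fun y' => deriv (fun y'' => Q z y'') y') y
      + μy*y * deriv (fun y' => Q z y') y
      - θ*σy*z*y * deriv (fun y' => deriv (fun z' => Q z' y') z) y
      - (ρ+m) * Q z y
      = -((γ/(1-γ))*z^((γ-1)/γ) + z*y) := by
  obtain rfl : Q = fun z y => (γ/((1-γ)*K)) * z^((γ-1)/γ) + z*y/κ := funext₂ hQ
  have hK0 : 0 < K := by
    rw [hK]
    have : 0 < ρ + m - (1-γ)*r - ((1-γ)/(2*γ))*θ^2 := by linarith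
    positivity
  have hγ1' : 1 - γ ≠ 0 := sub_ne_zero.mpr hγ1.symm
  refine ⟨(contDiffOn_rpow_add_mul (γ/((1-γ)*K)) ((γ-1)/γ) κ 2).mono
    fun p hp => (mem_Ioi.mp hp.1).ne', ?_⟩
  intro z y hz _
  change dualGenerator θ σy μy ρ r m (fun z y => (γ/((1-γ)*K)) * z^((γ-1)/γ) + z*y/κ) z y = _
  rw [dualGenerator_rpow_add_mul _ _ _ θ σy μy ρ r m hz, symbol_at_dual_exponent γ θ ρ r m hγ0.ne',
    ← hK, ← hκ]
  field_simp
  ring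

/-- Proposition 4.1 (controlled bequest): the explicit dual function `Q̂^B` is `C²` on
`(0,∞)²` and solves `−LQ̂^B = û + zy`. -/
theorem stmt_6 (γ θ σy μy ρ r m κ K : ℝ)
    (hγ0 : 0 < γ) (hγ1 : γ ≠ 1) (hρ : 0 < ρ) (hr : 0 < r) (hm : 0 < m)
    (hassume : (1-γ)*r + ((1-γ)/(2*γ))*θ^2 < ρ + m)
    (hK : K = (1/γ) * (ρ + m - (1-γ)*r - ((1-γ)/(2*γ))*θ^2))
    (hκ : κ = r - μy + σy*θ) (hκ0 : 0 < κ)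
    (Q : ℝ → ℝ → ℝ)
    (hQ : ∀ z y : ℝ, Q z y = (γ/((1-γ)*K)) * z^((γ-1)/γ) + z*y/κ) :
    ContDiffOn ℝ 2 (fun p : ℝ × ℝ => Q p.1 p.2) (Set.Ioi 0 ×ˢ Set.Ioi 0) ∧
    ∀ z y : ℝ, 0 < z → 0 < y →
      (1/2)*θ^2*z^2 * deriv (fun z' => deriv (fun z'' => Q z'' y) z') z
      + (ρ - r + m)*z * deriv (fun z' => Q z' y) z
      + (1/2)*σy^2*y^2 * deriv (fun y' => deriv (fun y'' => Q z y'') y') y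
      + μy*y * deriv (fun y' => Q z y') y
      - θ*σy*z*y * deriv (fun y' => deriv (fun z' => Q z' y') z) y
      - (ρ+m) * Q z y
      = -((γ/(1-γ))*z^((γ-1)/γ) + z*y) :=
  stmt_6_general γ θ σy μy ρ r m κ K hγ0 hγ1 hassume hK hκ hκ0 Q hQ
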